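/- Let T be a Steiner triple system on a finite set V, let U ⊆ V, and let x ∈ V with x not in the closure cl(U). Then |cl(U ∪ {x})| ≥ 2·|cl(U)| + 1. -/
import Mathlib


/-- A Steiner triple system on `V`: a family `T` of 3-element `Finset`s such that
every pair of distinct points lies in exactly one member of `T`. -/
def IsSTS {V : Type*} (T : Set (Finset V)) : Prop :=
  (∀ t ∈ T, t.card = 3) ∧
    ∀ x y : V, x ≠ y → ∃! t : Finset V, t ∈ T ∧ x ∈ t ∧ y ∈ t

/-- `W` is closed w.r.t. the triple system `T`: whenever a triple of `T` contains two
points of `W`, all (in particular the third) of its points lie in `W`. -/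
def StsClosed {V : Type*} (T : Set (Finset V)) (W : Set V) : Prop :=
  ∀ t ∈ T, ∀ x ∈ t, ∀ y ∈ t, x ≠ y → x ∈ W → y ∈ W → ∀ z ∈ t, z ∈ W

/-- The closure of `S` w.r.t. `T`: the smallest closed set containing `S`. -/
def stsCl {V : Type*} (T : Set (Finset V)) (S : Set V) : Set V :=
  ⋂₀ {W : Set V | S ⊆ W ∧ StsClosed T W}

/-- `S` is a spreading set: its closure is the whole point set. -/
def IsSpreading {V : Type*} (T : Set (Finset V)) (S : Set V) : Prop :=
  stsCl T S = Set.univ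

/-- `S` is a minimal spreading set: it is spreading but no proper subset is. -/
def IsMinSpreading {V : Type*} (T : Set (Finset V)) (S : Set V) : Prop :=
  IsSpreading T S ∧ ∀ S' : Set V, S' ⊂ S → ¬ IsSpreading T S'

lemma subset_stsCl {V : Type*} (T : Set (Finset V)) (S : Set V) : S ⊆ stsCl T S := by
  intro y hy W hW
  exact hW.1 hy

lemma stsCl_closed {V : Type*} (T : Set (Finset V)) (S : Set V) :
    StsClosed T (stsCl T S) := by
  intro t ht a ha b hb hab haC hbC z hz W hW
  exact hW.2 t ht a ha b hb hab (haC W hW) (hbC W hW) z hz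

lemma stsCl_min {V : Type*} (T : Set (Finset V)) (S W : Set V) (h1 : S ⊆ W)
    (h2 : StsClosed T W) : stsCl T S ⊆ W := by
  intro y hy
  exact hy W ⟨h1, h2⟩

/-- If `x` lies outside the closure of `U`, then the closure of `U ∪ {x}` has at
least `2 |cl U| + 1` elements. -/
theorem ncard_cl_insert_ge {V : Type*} [Fintype V] (T : Set (Finset V))
    (hT : IsSTS T) (U : Set V) (x : V) (hx : x ∉ stsCl T U) :
    2 * (stsCl T U).ncard + 1 ≤ (stsCl T (U ∪ {x})).ncard := by
  classical
  set C := stsCl T U with hC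
  set D := stsCl T (U ∪ {x}) with hD
  have hCD : C ⊆ D := stsCl_min T U D
    (fun y hy => subset_stsCl T (U ∪ {x}) (Or.inl hy)) (stsCl_closed T _)
  have hxD : x ∈ D := subset_stsCl T (U ∪ {x}) (Or.inr rfl)
  have hDclosed : StsClosed T D := stsCl_closed T _
  have hCclosed : StsClosed T C := stsCl_closed T _
  -- for each y in C, a third point of the triple through x and y
  have key : ∀ y : V, ∃ z : V, y ∈ C → z ∈ D ∧ z ∉ C ∧ z ≠ x ∧
      ∃ t ∈ T, x ∈ t ∧ y ∈ t ∧ z ∈ t := by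
    intro y
    by_cases hy : y ∈ C
    · have hxy : x ≠ y := fun h => hx (h ▸ hy)
      obtain ⟨t, ⟨htT, hxt, hyt⟩, -⟩ := hT.2 x y hxy
      have hcard : t.card = 3 := hT.1 t htT
      have hsub : ({x, y} : Finset V) ⊆ t := by
        intro a ha
        simp only [Finset.mem_insert, Finset.mem_singleton] at ha
        rcases ha with rfl | rfl
        exacts [hxt, hyt]
      have hne : ({x, y} : Finset V) ≠ t := by
        intro h
        have h2 : ({x, y} : Finset V).card = 2 := Finset.card_pair hxy
        rw [h, hcard] at h2
        omega
      obtain ⟨z, hzt, hznot⟩ := Finset.exists_of_ssubset (hsub.ssubset_of_ne hne)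
      simp only [Finset.mem_insert, Finset.mem_singleton, not_or] at hznot
      obtain ⟨hzx, hzy⟩ := hznot
      refine ⟨z, fun _ => ⟨?_, ?_, hzx, t, htT, hxt, hyt, hzt⟩⟩
      · exact hDclosed t htT x hxt y hyt hxy hxD (hCD hy) z hzt
      · intro hzC
        exact hx (hCclosed t htT y hyt z hzt (Ne.symm hzy) hy hzC x hxt)
    · exact ⟨y, fun h => absurd h hy⟩
  choose f hf using key
  -- injectivity of f on C
  have hinj : Set.InjOn f C := by
    intro y1 hy1 y2 hy2 heq
    obtain ⟨-, -, hz1x, t1, ht1, hxt1, hy1t1, hzt1⟩ := hf y1 hy1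
    obtain ⟨-, -, hz2x, t2, ht2, hxt2, hy2t2, hzt2⟩ := hf y2 hy2
    obtain ⟨t, -, huniq⟩ := hT.2 x (f y1) (Ne.symm hz1x)
    have e1 : t1 = t := huniq t1 ⟨ht1, hxt1, hzt1⟩
    have e2 : t2 = t := huniq t2 ⟨ht2, hxt2, heq ▸ hzt2⟩
    have hy2t1 : y2 ∈ t1 := by rw [e1, ← e2]; exact hy2t2
    -- t1 has card 3 and contains x, y1, f y1, y2
    have hy1x : y1 ≠ x := fun h => hx (h ▸ hy1)
    have hy2x : y2 ≠ x := fun h => hx (h ▸ hy2)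
    have hy1z : y1 ≠ f y1 := fun h => (hf y1 hy1).2.1 (h ▸ hy1)
    have hy2z : y2 ≠ f y1 := fun h => (hf y2 hy2).2.1 ((h.trans heq) ▸ hy2)
    by_contra hne
    have hsub : ({x, y1, y2, f y1} : Finset V) ⊆ t1 := by
      intro a ha
      simp only [Finset.mem_insert, Finset.mem_singleton] at ha
      rcases ha with rfl | rfl | rfl | rfl
      exacts [hxt1, hy1t1, hy2t1, hzt1]
    have h4 : ({x, y1, y2, f y1} : Finset V).card = 4 := by
      rw [Finset.card_insert_of_notMem, Finset.card_insert_of_notMem,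
        Finset.card_insert_of_notMem, Finset.card_singleton]
      · simp [hy2z]
      · simp [hy1z, hne]
      · simp [Ne.symm hy1x, Ne.symm hy2x, Ne.symm hz1x]
    have := Finset.card_le_card hsub
    rw [h4, hT.1 t1 ht1] at this
    omega
  -- count
  have hCfin : C.Finite := Set.toFinite C
  have hfCfin : (f '' C).Finite := Set.toFinite _
  have hfCD : f '' C ⊆ D := by
    rintro _ ⟨y, hy, rfl⟩
    exact (hf y hy).1
  have hdisj1 : Disjoint C (f '' C) := by
    rw [Set.disjoint_right]
    rintro _ ⟨y, hy, rfl⟩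
    exact (hf y hy).2.1
  have hxnot : x ∉ C ∪ f '' C := by
    rintro (h | ⟨y, hy, heq⟩)
    · exact hx h
    · exact (hf y hy).2.2.1 heq
  have hsubD : C ∪ f '' C ∪ {x} ⊆ D := by
    rintro a ((h | h) | h)
    exacts [hCD h, hfCD h, h ▸ hxD]
  have himg : (f '' C).ncard = C.ncard := Set.ncard_image_of_injOn hinj
  have h1 : (C ∪ f '' C ∪ {x}).ncard = C.ncard + C.ncard + 1 := by
    rw [Set.ncard_union_eq (Set.disjoint_singleton_right.mpr hxnot)
        (Set.toFinite _) (Set.toFinite _),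
      Set.ncard_union_eq hdisj1 hCfin hfCfin, himg, Set.ncard_singleton]
  calc 2 * C.ncard + 1 = (C ∪ f '' C ∪ {x}).ncard := by rw [h1]; ring
    _ ≤ D.ncard := Set.ncard_le_ncard hsubD (Set.toFinite D)
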